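/- Time-sharing lemma (eqs. (45)–(46) in Appendix B). Let (W,U,X,Y₁,Y₂) be random variables taking values in finite sets such that (Y₁,Y₂) − X − U − W is a Markov chain. Let λ ∈ (0,1], and let Θ be a random variable with values in {θ₁,θ₂}, independent of (W,U,X,Y₁,Y₂), with ℙ(Θ = θ₁) = λ. Define W̃ = W if Θ = θ₁ and W̃ = U if Θ = θ₂, and set W* = (Θ, W̃). Then: (1) I(U;Y₁|W*) − I(U;Y₂|W*) = λ·[ I(U;Y₁|W) − I(U;Y₂|W) ]; and (2) I(W*;Y₂) = I(W;Y₂) + (1−λ)·I(U;Y₂|W); in particular I(W*;Y₂) ≥ I(W;Y₂). -/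

import Mathlib

open scoped Classical BigOperators

noncomputable section

/-- Entropy (base 2) of a finitely supported distribution given as a function. -/
def entFun {α : Type} [Fintype α] (q : α → ℝ) : ℝ :=
  -∑ a, q a * Real.logb 2 (q a)

/-- Distribution (pushforward) of the random variable `A` under the pmf `p`. -/
def distOf {Ω α : Type} [Fintype Ω] [Fintype α] (p : Ω → ℝ) (A : Ω → α) : α → ℝ :=
  fun a => ∑ ω, if A ω = a then p ω else 0

/-- Shannon entropy `H(A)` (base 2). -/
def Hent {Ω α : Type} [Fintype Ω] [Fintype α] (p : Ω → ℝ) (A : Ω → α) : ℝ :=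
  entFun (distOf p A)

/-- Conditional entropy `H(A|B)`. -/
def CHent {Ω α β : Type} [Fintype Ω] [Fintype α] [Fintype β]
    (p : Ω → ℝ) (A : Ω → α) (B : Ω → β) : ℝ :=
  Hent p (fun ω => (A ω, B ω)) - Hent p B

/-- Mutual information `I(A;B)`. -/
def MI {Ω α β : Type} [Fintype Ω] [Fintype α] [Fintype β]
    (p : Ω → ℝ) (A : Ω → α) (B : Ω → β) : ℝ :=
  Hent p A + Hent p B - Hent p (fun ω => (A ω, B ω))

/-- Conditional mutual information `I(A;B|C)`. -/
def CMI {Ω α β γ : Type} [Fintype Ω] [Fintype α] [Fintype β] [Fintype γ]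
    (p : Ω → ℝ) (A : Ω → α) (B : Ω → β) (C : Ω → γ) : ℝ :=
  Hent p (fun ω => (A ω, C ω)) + Hent p (fun ω => (B ω, C ω))
    - Hent p (fun ω => (A ω, B ω, C ω)) - Hent p C

/-- `p` is a probability mass function on the finite type `α`. -/
def IsPMF {α : Type} [Fintype α] (p : α → ℝ) : Prop :=
  (∀ a, 0 ≤ p a) ∧ ∑ a, p a = 1

/-- `A` and `B` are conditionally independent given `C` (under the pmf `p`). -/
def CondIndep {Ω α β γ : Type} [Fintype Ω] [Fintype α] [Fintype β] [Fintype γ]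
    (p : Ω → ℝ) (A : Ω → α) (B : Ω → β) (C : Ω → γ) : Prop :=
  ∀ a b c,
    distOf p (fun ω => (A ω, B ω, C ω)) (a, b, c) * distOf p C c
      = distOf p (fun ω => (A ω, C ω)) (a, c) * distOf p (fun ω => (B ω, C ω)) (b, c)

/-!
Write `λ = ℙ(Θ = θ₁)`. For any `B`, the pair `(B, W*)` is in bijection with the variable equal
to `(B, W)` when `Θ = θ₁` and to `(B, U)` when `Θ = θ₂`; as `Θ` is independent of `(B, W, U)`,
this gives `H(B, W*) = H(Θ) + λ H(B, W) + (1 - λ) H(B, U)`. The `H(Θ)` terms cancel in mutual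
informations, so `I(A; B | W*)` and `I(W*; B)` are the `λ`-mixtures of the same quantities with
`W` and with `U` in place of `W*`. Part (1) follows because `I(U; Y | U) = 0`. For part (2), the
chain rule applied to `I((U, W); Y₂)` in both orders, together with `I(W; Y₂ | U) = 0` from the
Markov chain `W − U − Y₂`, gives `I(U; Y₂) = I(W; Y₂) + I(U; Y₂ | W)`; the inequality is
nonnegativity of conditional mutual information (Gibbs' inequality).
-/

open Finset Real

section Distribution

variable {Ω α β δ : Type} [Fintype Ω] [Fintype α] [Fintype β] [Fintype δ] {p : Ω → ℝ}

lemma distOf_nonneg (hp : ∀ ω, 0 ≤ p ω) (A : Ω → α) (a : α) : 0 ≤ distOf p A a :=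
  sum_nonneg fun ω _ => by split_ifs <;> simp [hp ω]

lemma sum_distOf_mul (A : Ω → α) (f : α → ℝ) :
    ∑ a, distOf p A a * f a = ∑ ω, p ω * f (A ω) := by
  simp only [distOf, sum_mul, ite_mul, zero_mul]
  rw [sum_comm]
  simp [eq_comm]

lemma IsPMF.sum_distOf (hp : IsPMF p) (A : Ω → α) : ∑ a, distOf p A a = 1 := by
  rw [← hp.2]
  simpa using sum_distOf_mul A fun _ => (1 : ℝ)

lemma distOf_comp_of_injective {f : α → β} (hf : Function.Injective f) (A : Ω → α) (a : α) :
    distOf p (fun ω => f (A ω)) (f a) = distOf p A a := by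
  simp only [distOf, hf.eq_iff]

lemma distOf_le_distOf_comp (hp : ∀ ω, 0 ≤ p ω) (f : α → β) (A : Ω → α) (a : α) :
    distOf p A a ≤ distOf p (fun ω => f (A ω)) (f a) :=
  sum_le_sum fun ω _ => by split_ifs with h₁ h₂ <;> simp_all [hp ω]

lemma sum_distOf_pair_left (A : Ω → α) (D : Ω → δ) (d : δ) :
    ∑ a, distOf p (fun ω => (A ω, D ω)) (a, d) = distOf p D d := by
  simp only [distOf]
  rw [sum_comm]
  simp [Prod.ext_iff, ite_and, sum_ite_eq]

lemma distOf_comp (g : α → β) (A : Ω → α) (b : β) :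
    distOf p (fun ω => g (A ω)) b = ∑ a with g a = b, distOf p A a := by
  simp only [distOf]
  rw [sum_comm]
  simp

lemma distOf_comp_fst (g : α → β) (A : Ω → α) (D : Ω → δ) (b : β) (d : δ) :
    distOf p (fun ω => (g (A ω), D ω)) (b, d)
      = ∑ a with g a = b, distOf p (fun ω => (A ω, D ω)) (a, d) := by
  simp only [distOf]
  rw [sum_comm]
  simp [Prod.ext_iff, ite_and]

lemma distOf_comp_snd (g : α → β) (D : Ω → δ) (A : Ω → α) (d : δ) (b : β) :
    distOf p (fun ω => (D ω, g (A ω))) (d, b)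
      = ∑ a with g a = b, distOf p (fun ω => (D ω, A ω)) (d, a) := by
  simp only [distOf]
  rw [sum_comm]
  simp [Prod.ext_iff, ite_and]

end Distribution

section Entropy

variable {Ω α β γ : Type} [Fintype Ω] [Fintype α] [Fintype β] [Fintype γ] {p : Ω → ℝ}

lemma Hent_eq_sum (A : Ω → α) : Hent p A = -∑ ω, p ω * logb 2 (distOf p A (A ω)) := by
  rw [Hent, entFun, sum_distOf_mul A fun a => logb 2 (distOf p A a)]

lemma Hent_comp_of_injective {f : α → β} (hf : Function.Injective f) (A : Ω → α) :
    Hent p (fun ω => f (A ω)) = Hent p A := by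
  simp only [Hent_eq_sum, distOf_comp_of_injective hf]

lemma Hent_prod_comm (A : Ω → α) (B : Ω → β) :
    Hent p (fun ω => (A ω, B ω)) = Hent p (fun ω => (B ω, A ω)) :=
  Hent_comp_of_injective Prod.swap_injective fun ω => (B ω, A ω)

lemma Hent_prod_assoc (A : Ω → α) (B : Ω → β) (C : Ω → γ) :
    Hent p (fun ω => (A ω, B ω, C ω)) = Hent p (fun ω => ((A ω, B ω), C ω)) :=
  Hent_comp_of_injective (Equiv.prodAssoc α β γ).injective fun ω => ((A ω, B ω), C ω)

lemma entFun_sum_type (q : α ⊕ β → ℝ) :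
    entFun q = entFun (fun a => q (.inl a)) + entFun (fun b => q (.inr b)) := by
  simp only [entFun, Fintype.sum_sum_type, neg_add]

lemma mul_logb_mul (c x : ℝ) :
    c * x * logb 2 (c * x) = c * (x * logb 2 x) + c * logb 2 c * x := by
  rcases eq_or_ne c 0 with rfl | hc
  · simp
  rcases eq_or_ne x 0 with rfl | hx
  · simp
  rw [logb_mul hc hx]
  ring

lemma entFun_const_mul (c : ℝ) (q : α → ℝ) :
    entFun (fun a => c * q a) = c * entFun q - c * logb 2 c * ∑ a, q a := by
  simp only [entFun, mul_logb_mul, sum_add_distrib, ← mul_sum]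
  ring

end Entropy

lemma sub_le_mul_log_div {q r : ℝ} (hq : 0 ≤ q) (hr : 0 ≤ r) (hqr : 0 < q → 0 < r) :
    q - r ≤ q * log (q / r) := by
  rcases hq.eq_or_lt with rfl | hq
  · simpa using hr
  have key := log_le_sub_one_of_pos (div_pos (hqr hq) hq)
  calc q - r = -(q * (r / q - 1)) := by field_simp; ring
    _ ≤ -(q * log (r / q)) := neg_le_neg (mul_le_mul_of_nonneg_left key hq.le)
    _ = q * log (q / r) := by rw [← inv_div, log_inv]; ring

theorem sum_mul_logb_div_nonneg {ι : Type} [Fintype ι] {q r : ι → ℝ} (hq : ∀ i, 0 ≤ q i)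
    (hr : ∀ i, 0 ≤ r i) (hqr : ∀ i, 0 < q i → 0 < r i) (hsum : ∑ i, r i ≤ ∑ i, q i) :
    0 ≤ ∑ i, q i * logb 2 (q i / r i) := by
  simp only [logb, ← mul_div_assoc, ← sum_div]
  refine div_nonneg ?_ (log_nonneg one_le_two)
  calc 0 ≤ ∑ i, (q i - r i) := by rw [sum_sub_distrib]; linarith
    _ ≤ _ := sum_le_sum fun i _ => sub_le_mul_log_div (hq i) (hr i) (hqr i)

section ConditionalMutualInformation

variable {Ω α β γ : Type} [Fintype Ω] [Fintype α] [Fintype β] [Fintype γ] {p : Ω → ℝ}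

/-- `P(a, c) P(b, c) / P(c)`, the law under which `A` and `B` are conditionally independent
given `C` with the same `(A, C)` and `(B, C)` marginals (it is `0` where `P(c) = 0`). -/
def condProdDist (p : Ω → ℝ) (A : Ω → α) (B : Ω → β) (C : Ω → γ) (x : α × β × γ) : ℝ :=
  distOf p (fun ω => (A ω, C ω)) (x.1, x.2.2) * distOf p (fun ω => (B ω, C ω)) x.2
    / distOf p C x.2.2

variable (A : Ω → α) (B : Ω → β) (C : Ω → γ)

lemma distOf_marginals_pos (hp : ∀ ω, 0 ≤ p ω) {x : α × β × γ}
    (hx : 0 < distOf p (fun ω => (A ω, B ω, C ω)) x) :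
    0 < distOf p (fun ω => (A ω, C ω)) (x.1, x.2.2) ∧ 0 < distOf p (fun ω => (B ω, C ω)) x.2 ∧
      0 < distOf p C x.2.2 :=
  ⟨hx.trans_le (distOf_le_distOf_comp hp (fun y => (y.1, y.2.2)) _ x),
    hx.trans_le (distOf_le_distOf_comp hp Prod.snd _ x),
    hx.trans_le (distOf_le_distOf_comp hp (fun y => y.2.2) _ x)⟩

lemma condProdDist_nonneg (hp : ∀ ω, 0 ≤ p ω) (x : α × β × γ) : 0 ≤ condProdDist p A B C x :=
  div_nonneg (mul_nonneg (distOf_nonneg hp _ _) (distOf_nonneg hp _ _)) (distOf_nonneg hp _ _)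

lemma sum_condProdDist (hp : IsPMF p) : ∑ x, condProdDist p A B C x = 1 := by
  calc ∑ x, condProdDist p A B C x
      = ∑ c, (∑ a, distOf p (fun ω => (A ω, C ω)) (a, c))
          * (∑ b, distOf p (fun ω => (B ω, C ω)) (b, c)) / distOf p C c := by
        simp only [condProdDist, Fintype.sum_prod_type, sum_mul_sum, sum_div]
        exact (sum_congr rfl fun _ _ => sum_comm).trans sum_comm
    _ = ∑ c, distOf p C c := by simp only [sum_distOf_pair_left, mul_self_div_self]
    _ = 1 := hp.sum_distOf C

lemma CMI_eq_sum_mul_logb :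
    CMI p A B C = ∑ x, distOf p (fun ω => (A ω, B ω, C ω)) x *
      (logb 2 (distOf p (fun ω => (A ω, B ω, C ω)) x) + logb 2 (distOf p C x.2.2)
        - logb 2 (distOf p (fun ω => (A ω, C ω)) (x.1, x.2.2))
        - logb 2 (distOf p (fun ω => (B ω, C ω)) x.2)) := by
  rw [sum_distOf_mul (fun ω => (A ω, B ω, C ω))]
  simp only [CMI, Hent_eq_sum, mul_add, mul_sub, sum_add_distrib, sum_sub_distrib]
  ring

lemma CMI_eq_sum_mul_logb_div (hp : ∀ ω, 0 ≤ p ω) :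
    CMI p A B C = ∑ x, distOf p (fun ω => (A ω, B ω, C ω)) x *
      logb 2 (distOf p (fun ω => (A ω, B ω, C ω)) x / condProdDist p A B C x) := by
  rw [CMI_eq_sum_mul_logb]
  refine sum_congr rfl fun x _ => ?_
  rcases (distOf_nonneg hp (fun ω => (A ω, B ω, C ω)) x).eq_or_lt with hx | hx
  · simp [← hx]
  obtain ⟨hAC, hBC, hC⟩ := distOf_marginals_pos A B C hp hx
  rw [condProdDist, logb_div hx.ne' (by positivity), logb_div (by positivity) hC.ne',
    logb_mul hAC.ne' hBC.ne']
  ring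

theorem CMI_nonneg (hp : IsPMF p) : 0 ≤ CMI p A B C := by
  rw [CMI_eq_sum_mul_logb_div A B C hp.1]
  refine sum_mul_logb_div_nonneg (distOf_nonneg hp.1 _) (condProdDist_nonneg A B C hp.1)
    (fun x hx => ?_) (by rw [sum_condProdDist A B C hp, hp.sum_distOf])
  obtain ⟨hAC, hBC, hC⟩ := distOf_marginals_pos A B C hp.1 hx
  exact div_pos (mul_pos hAC hBC) hC

variable {A B C}

theorem CondIndep.CMI_eq_zero (hp : ∀ ω, 0 ≤ p ω) (h : CondIndep p A B C) : CMI p A B C = 0 := by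
  rw [CMI_eq_sum_mul_logb_div A B C hp]
  refine sum_eq_zero fun x _ => ?_
  rcases (distOf_nonneg hp (fun ω => (A ω, B ω, C ω)) x).eq_or_lt with hx | hx
  · simp [← hx]
  have hC := (distOf_marginals_pos A B C hp hx).2.2
  have hprod : condProdDist p A B C x = distOf p (fun ω => (A ω, B ω, C ω)) x := by
    rw [condProdDist, div_eq_iff hC.ne', ← h]
  rw [hprod, div_self hx.ne', logb_one, mul_zero]

lemma CondIndep.symm (h : CondIndep p A B C) : CondIndep p B A C := by
  intro b a c
  have hswap := distOf_comp_of_injective (p := p) (f := fun x : α × β × γ => (x.2.1, x.1, x.2.2))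
    (Function.LeftInverse.injective (g := fun y => (y.2.1, y.1, y.2.2)) fun _ => rfl)
    (fun ω => (A ω, B ω, C ω)) (a, b, c)
  rw [hswap, h, mul_comm]

lemma CondIndep.comp_left {δ : Type} [Fintype δ] (h : CondIndep p A B C) (g : α → δ) :
    CondIndep p (fun ω => g (A ω)) B C := by
  intro d b c
  rw [distOf_comp_fst g A (fun ω => (B ω, C ω)), distOf_comp_fst g A C, sum_mul, sum_mul]
  exact sum_congr rfl fun a _ => h a b c

end ConditionalMutualInformation

section MutualInformation

variable {Ω α β γ : Type} [Fintype Ω] [Fintype α] [Fintype β] [Fintype γ] {p : Ω → ℝ}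

lemma MI_comp_left_of_injective {f : α → γ} (hf : Function.Injective f) (A : Ω → α)
    (B : Ω → β) : MI p (fun ω => f (A ω)) B = MI p A B := by
  have hAB : Hent p (fun ω => (f (A ω), B ω)) = Hent p (fun ω => (A ω, B ω)) :=
    Hent_comp_of_injective (hf.prodMap Function.injective_id) fun ω => (A ω, B ω)
  rw [MI, MI, hAB, Hent_comp_of_injective hf]

lemma CMI_cond_self (A : Ω → α) (B : Ω → β) : CMI p A B A = 0 := by
  have hAA : Hent p (fun ω => (A ω, A ω)) = Hent p A :=
    Hent_comp_of_injective (f := fun a => (a, a))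
      (Function.LeftInverse.injective (g := Prod.fst) fun _ => rfl) A
  have hABA : Hent p (fun ω => (A ω, B ω, A ω)) = Hent p (fun ω => (B ω, A ω)) :=
    Hent_comp_of_injective (f := fun x : β × α => (x.2, x.1, x.2))
      (Function.LeftInverse.injective (g := fun y => (y.2.1, y.1)) fun _ => rfl)
      fun ω => (B ω, A ω)
  rw [CMI, hAA, hABA]
  ring

theorem MI_prod_left (A : Ω → α) (B : Ω → β) (C : Ω → γ) :
    MI p (fun ω => (A ω, B ω)) C = MI p A C + CMI p B C A := by
  have hABC : Hent p (fun ω => ((A ω, B ω), C ω)) = Hent p (fun ω => (B ω, C ω, A ω)) :=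
    Hent_comp_of_injective (f := fun x : β × γ × α => ((x.2.2, x.1), x.2.1))
      (Function.LeftInverse.injective (g := fun y => (y.1.2, y.2, y.1.1)) fun _ => rfl)
      fun ω => (B ω, C ω, A ω)
  rw [MI, MI, CMI, hABC, Hent_prod_comm A B, Hent_prod_comm A C]
  ring

theorem CondIndep.MI_eq_MI_add_CMI {W : Ω → α} {Y : Ω → β} {U : Ω → γ} (hp : ∀ ω, 0 ≤ p ω)
    (h : CondIndep p W Y U) : MI p U Y = MI p W Y + CMI p U Y W := by
  have hUW := MI_prod_left (p := p) U W Y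
  have hWU := MI_prod_left (p := p) W U Y
  have hswap : MI p (fun ω => (W ω, U ω)) Y = MI p (fun ω => (U ω, W ω)) Y :=
    MI_comp_left_of_injective Prod.swap_injective (fun ω => (U ω, W ω)) Y
  rw [h.CMI_eq_zero hp] at hUW
  linarith

end MutualInformation

section TimeSharing

variable {Ω α β γ δ : Type} [Fintype Ω] [Fintype α] [Fintype β] [Fintype γ] [Fintype δ]
  {p : Ω → ℝ}

def IndepRV (p : Ω → ℝ) (A : Ω → α) (B : Ω → β) : Prop :=
  ∀ a b, distOf p (fun ω => (A ω, B ω)) (a, b) = distOf p A a * distOf p B b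

lemma IndepRV.comp_right {A : Ω → α} {V : Ω → β} (h : IndepRV p A V) (g : β → γ) :
    IndepRV p A (fun ω => g (V ω)) := by
  intro a c
  rw [distOf_comp_snd g A V, distOf_comp g V, mul_sum]
  exact sum_congr rfl fun v _ => h a v

lemma IsPMF.distOf_false (hp : IsPMF p) (Θ : Ω → Bool) :
    distOf p Θ false = 1 - distOf p Θ true := by
  have := hp.sum_distOf Θ
  rw [Fintype.sum_bool] at this
  linarith

variable {Θ : Ω → Bool}

lemma distOf_switch_inl (V₁ : Ω → α) (V₂ : Ω → β) (a : α) :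
    distOf p (fun ω => if Θ ω then Sum.inl (V₁ ω) else Sum.inr (V₂ ω)) (.inl a)
      = distOf p (fun ω => (Θ ω, V₁ ω)) (true, a) :=
  sum_congr rfl fun ω _ => by cases hΘ : Θ ω <;> simp [hΘ]

lemma distOf_switch_inr (V₁ : Ω → α) (V₂ : Ω → β) (b : β) :
    distOf p (fun ω => if Θ ω then Sum.inl (V₁ ω) else Sum.inr (V₂ ω)) (.inr b)
      = distOf p (fun ω => (Θ ω, V₂ ω)) (false, b) :=
  sum_congr rfl fun ω _ => by cases hΘ : Θ ω <;> simp [hΘ]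

theorem Hent_switch (hp : IsPMF p) {V₁ : Ω → α} {V₂ : Ω → β} (h₁ : IndepRV p Θ V₁)
    (h₂ : IndepRV p Θ V₂) :
    Hent p (fun ω => if Θ ω then Sum.inl (V₁ ω) else Sum.inr (V₂ ω))
      = Hent p Θ + distOf p Θ true * Hent p V₁ + distOf p Θ false * Hent p V₂ := by
  have hΘ : Hent p Θ = -(distOf p Θ true * logb 2 (distOf p Θ true)
      + distOf p Θ false * logb 2 (distOf p Θ false)) := by
    rw [Hent, entFun, Fintype.sum_bool]
  rw [hΘ, Hent, entFun_sum_type]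
  simp only [distOf_switch_inl, distOf_switch_inr, h₁ true, h₂ false, entFun_const_mul,
    hp.sum_distOf, Hent]
  ring

def timeShare (Θ : Ω → Bool) (W : Ω → α) (U : Ω → β) : Ω → Bool × (α ⊕ β) :=
  fun ω => (Θ ω, if Θ ω then .inl (W ω) else .inr (U ω))

theorem Hent_timeShare (hp : IsPMF p) {W : Ω → α} {U : Ω → β}
    (h : IndepRV p Θ (fun ω => (W ω, U ω))) :
    Hent p (timeShare Θ W U)
      = Hent p Θ + distOf p Θ true * Hent p W + distOf p Θ false * Hent p U := by
  let f : α ⊕ β → Bool × (α ⊕ β) := Sum.elim (fun w => (true, .inl w)) (fun u => (false, .inr u))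
  have hf : Function.Injective f := Function.LeftInverse.injective (g := Prod.snd) (by
    rintro (w | u) <;> rfl)
  have hZ : timeShare Θ W U = fun ω => f (if Θ ω then .inl (W ω) else .inr (U ω)) := by
    funext ω
    simp only [timeShare]
    cases Θ ω <;> rfl
  rw [hZ, Hent_comp_of_injective hf, Hent_switch hp (h.comp_right Prod.fst)
    (h.comp_right Prod.snd)]

theorem Hent_pair_timeShare (hp : IsPMF p) {B : Ω → δ} {W : Ω → α} {U : Ω → β}
    (h : IndepRV p Θ (fun ω => (B ω, W ω, U ω))) :
    Hent p (fun ω => (B ω, timeShare Θ W U ω))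
      = Hent p Θ + distOf p Θ true * Hent p (fun ω => (B ω, W ω))
        + distOf p Θ false * Hent p (fun ω => (B ω, U ω)) := by
  let f : (δ × α) ⊕ (δ × β) → δ × Bool × (α ⊕ β) :=
    Sum.elim (fun x => (x.1, true, .inl x.2)) (fun y => (y.1, false, .inr y.2))
  have hf : Function.Injective f := by
    rintro (⟨b, w⟩ | ⟨b, u⟩) (⟨b', w'⟩ | ⟨b', u'⟩) hbw <;> simp_all [f]
  have hZ : (fun ω => (B ω, timeShare Θ W U ω))
      = fun ω => f (if Θ ω then .inl (B ω, W ω) else .inr (B ω, U ω)) := by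
    funext ω
    simp only [timeShare]
    cases Θ ω <;> rfl
  rw [hZ, Hent_comp_of_injective hf, Hent_switch hp (h.comp_right fun v => (v.1, v.2.1))
    (h.comp_right fun v => (v.1, v.2.2))]

theorem CMI_timeShare (hp : IsPMF p) {A : Ω → γ} {B : Ω → δ} {W : Ω → α} {U : Ω → β}
    (h : IndepRV p Θ (fun ω => (A ω, B ω, W ω, U ω))) :
    CMI p A B (timeShare Θ W U)
      = distOf p Θ true * CMI p A B W + distOf p Θ false * CMI p A B U := by
  simp only [CMI]
  rw [Hent_prod_assoc A B, Hent_prod_assoc A B W, Hent_prod_assoc A B U,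
    Hent_pair_timeShare hp (B := A) (h.comp_right fun v => (v.1, v.2.2)),
    Hent_pair_timeShare hp (B := B) (h.comp_right Prod.snd),
    Hent_pair_timeShare hp (B := fun ω => (A ω, B ω))
      (h.comp_right fun v => ((v.1, v.2.1), v.2.2)),
    Hent_timeShare hp (h.comp_right fun v => v.2.2)]
  ring

theorem MI_timeShare (hp : IsPMF p) {B : Ω → δ} {W : Ω → α} {U : Ω → β}
    (h : IndepRV p Θ (fun ω => (B ω, W ω, U ω))) :
    MI p (timeShare Θ W U) B = distOf p Θ true * MI p W B + distOf p Θ false * MI p U B := by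
  simp only [MI]
  rw [Hent_prod_comm (timeShare Θ W U), Hent_prod_comm W, Hent_prod_comm U,
    Hent_pair_timeShare hp h, Hent_timeShare hp (h.comp_right Prod.snd), hp.distOf_false]
  ring

end TimeSharing

theorem time_sharing_general {Ω WT UT XT B1 B2 : Type} [Fintype Ω] [Fintype WT]
    [Fintype UT] [Fintype XT] [Fintype B1] [Fintype B2]
    (p : Ω → ℝ) (hp : IsPMF p)
    (W : Ω → WT) (U : Ω → UT) (X : Ω → XT) (Y1 : Ω → B1) (Y2 : Ω → B2)
    -- `(Y1,Y2) − X − U − W` is a Markov chain: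
    (hMarkov2 : CondIndep p (fun ω => (Y1 ω, Y2 ω, X ω)) W U)
    (lam : ℝ) (hlam1 : lam ≤ 1)
    (Th : Ω → Bool)
    -- `Θ` is independent of `(W,U,X,Y1,Y2)`:
    (hThInd : ∀ t v, distOf p (fun ω => (Th ω, W ω, U ω, X ω, Y1 ω, Y2 ω)) (t, v)
        = distOf p Th t * distOf p (fun ω => (W ω, U ω, X ω, Y1 ω, Y2 ω)) v)
    (hThLam : distOf p Th true = lam) :
    -- `W* = (Θ, W̃)` with `W̃ = W` if `Θ = θ1` and `W̃ = U` if `Θ = θ2`: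
    (CMI p U Y1 (fun ω => (Th ω, if Th ω then Sum.inl (W ω) else Sum.inr (U ω)))
      - CMI p U Y2 (fun ω => (Th ω, if Th ω then Sum.inl (W ω) else Sum.inr (U ω)))
      = lam * (CMI p U Y1 W - CMI p U Y2 W)) ∧
    (MI p (fun ω => (Th ω, if Th ω then Sum.inl (W ω) else Sum.inr (U ω))) Y2
      = MI p W Y2 + (1 - lam) * CMI p U Y2 W) ∧
    MI p W Y2 ≤
      MI p (fun ω => (Th ω, if Th ω then Sum.inl (W ω) else Sum.inr (U ω))) Y2 := by
  have hZ : (fun ω => (Th ω, if Th ω then Sum.inl (W ω) else Sum.inr (U ω)))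
      = timeShare Th W U := rfl
  have hInd : IndepRV p Th (fun ω => (W ω, U ω, X ω, Y1 ω, Y2 ω)) := hThInd
  have hUY1 : IndepRV p Th (fun ω => (U ω, Y1 ω, W ω, U ω)) :=
    hInd.comp_right fun v => (v.2.1, v.2.2.2.1, v.1, v.2.1)
  have hUY2 : IndepRV p Th (fun ω => (U ω, Y2 ω, W ω, U ω)) :=
    hInd.comp_right fun v => (v.2.1, v.2.2.2.2, v.1, v.2.1)
  have hThF : distOf p Th false = 1 - lam := by rw [hp.distOf_false, hThLam]
  have hWY2U : CondIndep p W Y2 U := (hMarkov2.comp_left fun y => y.2.1).symm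
  have hMI : MI p (timeShare Th W U) Y2 = MI p W Y2 + (1 - lam) * CMI p U Y2 W := by
    rw [MI_timeShare hp (hUY2.comp_right Prod.snd), hThLam, hThF,
      hWY2U.MI_eq_MI_add_CMI hp.1]
    ring
  rw [hZ]
  refine ⟨?_, hMI, ?_⟩
  · rw [CMI_timeShare hp hUY1, CMI_timeShare hp hUY2, CMI_cond_self, CMI_cond_self, hThLam]
    ring
  · rw [hMI]
    exact le_add_of_nonneg_right (mul_nonneg (sub_nonneg.2 hlam1) (CMI_nonneg U Y2 W hp))

/-- **Time-sharing lemma (eqs. (45)–(46), Appendix B).** -/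
theorem time_sharing {Ω WT UT XT B1 B2 : Type} [Fintype Ω] [Fintype WT]
    [Fintype UT] [Fintype XT] [Fintype B1] [Fintype B2]
    (p : Ω → ℝ) (hp : IsPMF p)
    (W : Ω → WT) (U : Ω → UT) (X : Ω → XT) (Y1 : Ω → B1) (Y2 : Ω → B2)
    -- `(Y1,Y2) − X − U − W` is a Markov chain:
    (hMarkov1 : CondIndep p (fun ω => (Y1 ω, Y2 ω)) (fun ω => (U ω, W ω)) X)
    (hMarkov2 : CondIndep p (fun ω => (Y1 ω, Y2 ω, X ω)) W U)
    (lam : ℝ) (hlam0 : 0 < lam) (hlam1 : lam ≤ 1)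
    (Th : Ω → Bool)
    -- `Θ` is independent of `(W,U,X,Y1,Y2)`:
    (hThInd : ∀ t v, distOf p (fun ω => (Th ω, W ω, U ω, X ω, Y1 ω, Y2 ω)) (t, v)
        = distOf p Th t * distOf p (fun ω => (W ω, U ω, X ω, Y1 ω, Y2 ω)) v)
    (hThLam : distOf p Th true = lam) :
    -- `W* = (Θ, W̃)` with `W̃ = W` if `Θ = θ1` and `W̃ = U` if `Θ = θ2`:
    (CMI p U Y1 (fun ω => (Th ω, if Th ω then Sum.inl (W ω) else Sum.inr (U ω)))
      - CMI p U Y2 (fun ω => (Th ω, if Th ω then Sum.inl (W ω) else Sum.inr (U ω)))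
      = lam * (CMI p U Y1 W - CMI p U Y2 W)) ∧
    (MI p (fun ω => (Th ω, if Th ω then Sum.inl (W ω) else Sum.inr (U ω))) Y2
      = MI p W Y2 + (1 - lam) * CMI p U Y2 W) ∧
    MI p W Y2 ≤
      MI p (fun ω => (Th ω, if Th ω then Sum.inl (W ω) else Sum.inr (U ω))) Y2 :=
  time_sharing_general p hp W U X Y1 Y2 hMarkov2 lam hlam1 Th hThInd hThLam
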